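/- For every ω ∈ 𝒯 and every h ≥ 1, the function λ ↦ φ_ω(λ,h) is nonincreasing on [0,∞). -/

import Mathlib

open Filter Topology
open scoped BigOperators ENNReal

noncomputable section
namespace Copoly

/-- The number of elements of a finite type satisfying a predicate. -/
def cardOf {α : Type*} [Fintype α] (P : α → Prop) : ℕ :=
  (@Finset.filter _ P (Classical.decPred P) Finset.univ).card

/-- A single step of the simple random walk. -/
def step (b : Bool) : ℤ := if b then 1 else -1

/-- The simple random walk path built from the increments `y`. -/
def walk (y : ℕ → Bool) (x : ℕ) : ℤ := ∑ i ∈ Finset.range x, step (y i)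

/-- `sign (S x)`, with the convention `sign (S x) = sign (S (x-1))` when `S x = 0`. -/
def wsign (y : ℕ → Bool) : ℕ → ℤ
  | 0 => 1
  | x + 1 => if walk y (x + 1) = 0 then wsign y x else Int.sign (walk y (x + 1))

/-- Extension of a finite tuple of increments by `false`. -/
def ext {N : ℕ} (y : Fin N → Bool) : ℕ → Bool :=
  fun i => if h : i < N then y ⟨i, h⟩ else false

/-- The partition function `Z_{N,ω,λ,h} = E[exp (λ ∑_{x=1}^N (ω_x + h) sign (S_x))]`,
written as the exact average over the `2^N` equally likely increment strings. -/
def Zpart (ω : ℕ → ℤ) (lam h : ℝ) (N : ℕ) : ℝ :=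
  (1 / 2 : ℝ) ^ N * ∑ y : Fin N → Bool,
    Real.exp (lam * ∑ x ∈ Finset.Icc 1 N, ((ω x : ℝ) + h) * (wsign (ext y) x : ℝ))

/-- `ω` is centered and `2T`-periodic with `T ≥ 1`. -/
def IsPeriod (ω : ℕ → ℤ) (T : ℕ) : Prop :=
  0 < T ∧ (∀ x, ω (x + 2 * T) = ω x) ∧ ∑ x ∈ Finset.Icc 1 (2 * T), ω x = 0

/-- The class `𝒯` of nontrivial centered periodic sequences with values in `{-1,1}`. -/
def memT (ω : ℕ → ℤ) : Prop :=
  (∀ x, ω x = 1 ∨ ω x = -1) ∧ (∃ T, IsPeriod ω T) ∧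
    ¬ (∀ k : ℕ, 1 ≤ k → ω (2 * k - 1) * ω (2 * k) = -1)

/-- `T_ω`, the smallest (half-)period of `ω`. -/
def Tper (ω : ℕ → ℤ) : ℕ := sInf {T | IsPeriod ω T}

/-- The free energy `f_ω(λ,h)` (the limit defining it exists). -/
def freeEnergy (ω : ℕ → ℤ) (lam h : ℝ) : ℝ :=
  limUnder atTop fun N : ℕ => Real.log (Zpart ω lam h N) / N

/-- `φ_ω(λ,h) = f_ω(λ,h) - λ h`. -/
def phiFE (ω : ℕ → ℤ) (lam h : ℝ) : ℝ := freeEnergy ω lam h - lam * h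

/-- `ξ_{α,β} = ∑_{x=2a+1}^{2b} ω_x` for representatives `a ∈ α`, `b ∈ β` with `a < b`. -/
def xiM (T : ℕ) (ω : ℕ → ℤ) (α β : ZMod T) : ℤ :=
  ∑ x ∈ Finset.Icc (2 * α.val + 1)
      (2 * (if α.val < β.val then β.val else β.val + T)), ω x

/-- `K(x) = P(η = x)`, the law of the first return time to `0` of the walk. -/
def Kret (x : ℕ) : ℝ :=
  if x = 0 then 0 else
    (1 / 2 : ℝ) ^ x * (cardOf fun y : Fin x → Bool =>
      walk (ext y) x = 0 ∧ ∀ z, 0 < z → z < x → walk (ext y) z ≠ 0 : ℕ)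

/-- `p_{α,β} = P(η/2 ∈ β - α)`. -/
def pmat (T : ℕ) (α β : ZMod T) : ℝ :=
  ∑' n : ℕ, if (n : ZMod T) = β - α then Kret (2 * n) else 0

/-- `K_{α,β}(x) = P(η = x | η/2 ∈ β - α)`. -/
def Kcond (T : ℕ) (α β : ZMod T) (x : ℕ) : ℝ :=
  if x % 2 = 0 ∧ ((x / 2 : ℕ) : ZMod T) = β - α then Kret x / pmat T α β else 0

/-- `Φ^{λ,h}_{α,β}(x) = log ((1 + exp (-2(λ ξ_{α,β} + λ h x)))/2)`. -/
def PhiM (T : ℕ) (ω : ℕ → ℤ) (lam h : ℝ) (α β : ZMod T) (x : ℕ) : ℝ :=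
  Real.log ((1 + Real.exp (-2 * (lam * (xiM T ω α β : ℝ) + lam * h * x))) / 2)

/-- The matrix `A_{α,β}(b,λ,h)`. -/
def Amat (T : ℕ) (ω : ℕ → ℤ) (b lam h : ℝ) (α β : ZMod T) : ℝ :=
  pmat T α β * ∑' x : ℕ, Kcond T α β x * Real.exp (PhiM T ω lam h α β x - b * x)

/-- The Perron–Frobenius eigenvalue of a matrix with positive entries: the unique
eigenvalue admitting a strictly positive eigenvector. -/
def PFeig {T : ℕ} (A : ZMod T → ZMod T → ℝ) : ℝ :=
  sSup {r : ℝ | ∃ v : ZMod T → ℝ, (∀ i, 0 < v i) ∧ ∀ i, (∑' j : ZMod T, A i j * v j) = r * v i}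

/-- `Z(b,λ,h)`, the Perron–Frobenius eigenvalue of `A(b,λ,h)`. -/
def Zeig (T : ℕ) (ω : ℕ → ℤ) (b lam h : ℝ) : ℝ := PFeig (Amat T ω b lam h)

open Classical in
/-- `b̃(λ,h)`: the unique `b > 0` solving `Z(b,λ,h) = 1` if it exists, and `0` otherwise. -/
def btilde (T : ℕ) (ω : ℕ → ℤ) (lam h : ℝ) : ℝ :=
  if hb : ∃ b > 0, Zeig T ω b lam h = 1 then hb.choose else 0

/-- The state space `𝕊 × 𝕊 × 2ℕ` (the last coordinate records the even excursion length). -/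
abbrev Sp (T : ℕ) := ZMod T × ZMod T × ℕ

/-- First `𝕊`-marginal of `μ`. -/
def marg1 {T : ℕ} (μ : Sp T → ℝ) (α : ZMod T) : ℝ := ∑' q : ZMod T × ℕ, μ (α, q.1, q.2)

/-- Second `𝕊`-marginal of `μ`. -/
def marg2 {T : ℕ} (μ : Sp T → ℝ) (β : ZMod T) : ℝ := ∑' q : ZMod T × ℕ, μ (q.1, β, q.2)

/-- The set `𝒫`: probability measures on `𝕊 × 𝕊 × 2ℕ` with equal `𝕊`-marginals,
supported on `{(α,β,x) : x ∈ 2ℕ, x/2 ∈ β - α}`. -/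
def memP {T : ℕ} (μ : Sp T → ℝ) : Prop :=
  (∀ p, 0 ≤ μ p) ∧ HasSum μ 1 ∧
    (∀ p : Sp T, μ p ≠ 0 →
      p.2.2 % 2 = 0 ∧ 2 ≤ p.2.2 ∧ ((p.2.2 / 2 : ℕ) : ZMod T) = p.2.1 - p.1) ∧
    ∀ γ, marg1 μ γ = marg2 μ γ

/-- The nonnegative summand `a log (a/c) - a + c` of relative entropy. -/
def klF (a c : ℝ) : ℝ := a * Real.log (a / c) - a + c

/-- Relative entropy `H(μ | ν) ∈ [0,∞]` of two probability measures on a countable space. -/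
def Dkl {T : ℕ} (μ ν : Sp T → ℝ) : ℝ≥0∞ := ∑' p : Sp T, ENNReal.ofReal (klF (μ p) (ν p))

/-- The rate functional `I(μ) = ∑ μ(α,β,x) log (μ(α,β,x)/(μ(α) p_{α,β} K_{α,β}(x))) ∈ [0,∞]`. -/
def Ifun (T : ℕ) (μ : Sp T → ℝ) : ℝ≥0∞ :=
  ∑' p : Sp T,
    ENNReal.ofReal (klF (μ p) (marg1 μ p.1 * pmat T p.1 p.2.1 * Kcond T p.1 p.2.1 p.2.2))

/-- `Q(μ) = ∑ Φ^{λ,h}_{α,β}(x) μ(α,β,x) - I(μ)`, with values in `[-∞,∞)`. -/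
def Qfun (T : ℕ) (ω : ℕ → ℤ) (lam h : ℝ) (μ : Sp T → ℝ) : EReal :=
  ((∑' p : Sp T, PhiM T ω lam h p.1 p.2.1 p.2.2 * μ p : ℝ) : EReal) - (Ifun T μ : EReal)

/-- The measure `μ_b^{λ,h}(α,β,x) = π(α) p_{α,β} K_{α,β}(x) exp(Φ(x) - bx) v_β/(Z v_α)`. -/
def muB (T : ℕ) (ω : ℕ → ℤ) (b lam h : ℝ) (π v : ZMod T → ℝ) (p : Sp T) : ℝ :=
  π p.1 * pmat T p.1 p.2.1 * Kcond T p.1 p.2.1 p.2.2 *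
      Real.exp (PhiM T ω lam h p.1 p.2.1 p.2.2 - b * p.2.2) * v p.2.1 /
    (Zeig T ω b lam h * v p.1)

/-- `v` is a strictly positive right Perron–Frobenius eigenvector of `A(b,λ,h)` and `π` is
the probability left eigenvector (with eigenvalue 1) of the associated stochastic matrix
`(A_{α,β} v_β / (Z v_α))`. -/
def IsPF (T : ℕ) (ω : ℕ → ℤ) (b lam h : ℝ) (π v : ZMod T → ℝ) : Prop :=
  (∀ i, 0 < v i) ∧
    (∀ i, (∑' j : ZMod T, Amat T ω b lam h i j * v j) = Zeig T ω b lam h * v i) ∧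
    (∀ i, 0 ≤ π i) ∧ (∑' i : ZMod T, π i) = 1 ∧
    ∀ j, (∑' i : ZMod T, π i * (Amat T ω b lam h i j * v j / (Zeig T ω b lam h * v i))) = π j

/-- `H̃(μ | ν)`: the difference of relative entropies
`H(μ | ν) - H(μ_1 | ν_1)`, with values in `[-∞,∞]`. -/
def Htil {T : ℕ} (μ ν : Sp T → ℝ) : EReal :=
  (Dkl μ ν : EReal) - ((∑' α : ZMod T, klF (marg1 μ α) (marg1 ν α) : ℝ) : EReal)

open Classical in
/-- `f(b) = ∑_{α,β,x} x μ_b^{λ,h}(α,β,x)` (defined through a choice of the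
Perron–Frobenius data, on which it does not depend). -/
def fmean (T : ℕ) (ω : ℕ → ℤ) (b lam h : ℝ) : ℝ :=
  if hpf : ∃ w : (ZMod T → ℝ) × (ZMod T → ℝ), IsPF T ω b lam h w.1 w.2 then
    ∑' p : Sp T, (p.2.2 : ℝ) * muB T ω b lam h hpf.choose.1 hpf.choose.2 p
  else 0

/-- `Φ̂_{α,β}(x)` from the large-`λ` asymptotics. -/
def PhiHat (T : ℕ) (ω : ℕ → ℤ) (M : ℝ) (α β : ZMod T) (x : ℕ) : ℝ :=
  -Real.log 2 +
    (if xiM T ω α β = -(x : ℤ) then Real.log (1 + Real.exp (2 * M * x)) else 0)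

/-- `Ẑ(M)`, the Perron–Frobenius eigenvalue of `(p_{α,β} ∑_x K_{α,β}(x) exp (Φ̂_{α,β}(x)))`. -/
def Zhat (T : ℕ) (ω : ℕ → ℤ) (M : ℝ) : ℝ :=
  PFeig fun α β : ZMod T => pmat T α β * ∑' x : ℕ, Kcond T α β x * Real.exp (PhiHat T ω M α β x)

/-- The successive return times to `0` of the walk (`sInf ∅ = 0` on the irrelevant
event that the walk does not return). -/
def eta : ℕ → (ℕ → Bool) → ℕ
  | 0, _ => 0
  | k + 1, y => sInf {x | eta k y < x ∧ walk y x = 0}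

/-- Probability measures on `𝕊 × 𝕊 × 2ℕ`, with the topology of weak convergence
(= pointwise convergence on a countable discrete space). -/
abbrev PM (T : ℕ) := {μ : Sp T → ℝ // (∀ p, 0 ≤ μ p) ∧ HasSum μ 1}

/-- The empirical measure `L_m` of `{(α_j, β_j, Δη_j)}_{j<m}` along the path `y`. -/
def LmFun (T : ℕ) (m : ℕ) (y : ℕ → Bool) (p : Sp T) : ℝ :=
  (cardOf fun j : Fin m =>
      ((eta j.val y / 2 : ℕ) : ZMod T) = p.1 ∧
        ((eta (j.val + 1) y / 2 : ℕ) : ZMod T) = p.2.1 ∧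
        eta (j.val + 1) y - eta j.val y = p.2.2 : ℕ) / (m : ℝ)

open Classical in
/-- `P(L_m ∈ A)`: the probability that the `m`-th return to `0` occurs (at some time `n`)
and the empirical measure `L_m` belongs to `A`, written via cylinder sets. -/
def Pevent (T : ℕ) (A : Set (PM T)) (m : ℕ) : ℝ :=
  ∑' n : ℕ, (1 / 2 : ℝ) ^ n *
    (cardOf fun y : Fin n → Bool =>
      eta m (ext y) = n ∧ (∀ j, j < m → eta j (ext y) < eta (j + 1) (ext y)) ∧
        ∃ hpm : (∀ p, 0 ≤ LmFun T m (ext y) p) ∧ HasSum (LmFun T m (ext y)) 1,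
          (⟨LmFun T m (ext y), hpm⟩ : PM T) ∈ A : ℕ)

open Classical in
/-- The rate functional on probability measures: `I(μ)` if `μ ∈ 𝒫` and `+∞` otherwise. -/
def IfullPM {T : ℕ} (μ : PM T) : ℝ≥0∞ := if memP μ.1 then Ifun T μ.1 else ⊤

open Classical in
/-- `log` with values in `[-∞,∞)`: `elog r = -∞` for `r ≤ 0`. -/
def elog (r : ℝ) : EReal := if r ≤ 0 then ⊥ else ((Real.log r : ℝ) : EReal)

/-- The space `(𝕊 × 2ℕ) × (𝕊 × 2ℕ)`. -/
abbrev W (T : ℕ) := (ZMod T × ℕ) × (ZMod T × ℕ)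

/-- The transition kernel `q((α,x),(α',x')) = p_{α,α'} K_{α,α'}(x')`. -/
def qker (T : ℕ) (w w' : ZMod T × ℕ) : ℝ := pmat T w.1 w'.1 * Kcond T w.1 w'.1 w'.2

/-- First marginal of a measure on `(𝕊 × 2ℕ)²`. -/
def nu1 {T : ℕ} (ν : W T → ℝ) (w : ZMod T × ℕ) : ℝ := ∑' w' : ZMod T × ℕ, ν (w, w')

/-- Second marginal of a measure on `(𝕊 × 2ℕ)²`. -/
def nu2 {T : ℕ} (ν : W T → ℝ) (w : ZMod T × ℕ) : ℝ := ∑' w' : ZMod T × ℕ, ν (w', w)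

/-- `ν̂(α,β,x) = ∑_z ν(α,z,β,x)`. -/
def nuHat {T : ℕ} (ν : W T → ℝ) (p : Sp T) : ℝ := ∑' z : ℕ, ν ((p.1, z), (p.2.1, p.2.2))

open Classical in
/-- `Î(ν) = H(ν | ν₁ ⊗ q)` if the two marginals of `ν` coincide, `+∞` otherwise. -/
def Ihat {T : ℕ} (ν : W T → ℝ) : ℝ≥0∞ :=
  if ∀ w, nu1 ν w = nu2 ν w then
    ∑' w : W T, ENNReal.ofReal (klF (ν w) (nu1 ν w.1 * qker T w.1 w.2))
  else ⊤

/-- Relative entropy `H(ν | ρ) ∈ [0,∞]` on `(𝕊 × 2ℕ)²`. -/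
def DklW {T : ℕ} (ν ρ : W T → ℝ) : ℝ≥0∞ := ∑' w : W T, ENNReal.ofReal (klF (ν w) (ρ w))

/-- `μ̄((α,x),(α',x')) = (∑_γ μ(γ,α,x) / ∑_{γ,z} μ(γ,α,z)) μ(α,α',x')`
(with the convention that the value is `0` when the denominator vanishes). -/
def mubar {T : ℕ} (μ : Sp T → ℝ) (w : W T) : ℝ :=
  ((∑' γ : ZMod T, μ (γ, w.1.1, w.1.2)) / marg2 μ w.1.1) * μ (w.1.1, w.2.1, w.2.2)

end Copoly

/-!
For `h ≥ 1` every weight `ω_x + h` is nonnegative, so `Z_N ≤ exp (λ ∑_{x ≤ N} (ω_x + h))`.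
Conversely, every path that stays nonnegative up to time `N` collects exactly this energy, and
such paths have probability at least `1 / (2 (N + 1)²)`: rotating a bridge of length `2n` so
that it starts at its minimum makes it nonnegative (cycle lemma), so at least a fraction
`1 / (2n)` of the `(2n).choose n` bridges is nonnegative. Since `ω` is centered and periodic,
`∑_{x ≤ N} ω_x` is bounded, hence `(1/N) log Z_N → λ h`, i.e. `φ_ω(λ, h) = 0` for all `λ ≥ 0`.
-/

namespace Copoly

open Finset

lemma sum_range_mod_of_periodic {M : Type*} [AddCommMonoid M] {g : ℕ → M} {p : ℕ}
    (hg : Function.Periodic g p) (h0 : ∑ i ∈ range p, g i = 0) (n : ℕ) :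
    ∑ i ∈ range (n % p), g i = ∑ i ∈ range n, g i := by
  have hshift : ∀ n, ∑ i ∈ range (p + n), g i = ∑ i ∈ range n, g i := fun n => by
    rw [sum_range_add, h0, zero_add]
    exact sum_congr rfl fun i _ => by rw [add_comm, hg]
  conv_rhs => rw [← Nat.mod_add_div n p]
  induction n / p with
  | zero => rfl
  | succ q ih => rw [Nat.mul_succ, ← add_assoc, add_comm _ p, hshift, ih]

lemma norm_sum_range_le_of_periodic {E : Type*} [SeminormedAddCommGroup E] {g : ℕ → E} {p : ℕ}
    (hp : 0 < p) (hg : Function.Periodic g p) (h0 : ∑ i ∈ range p, g i = 0) (n : ℕ) :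
    ‖∑ i ∈ range n, g i‖ ≤ ∑ i ∈ range p, ‖g i‖ := by
  rw [← sum_range_mod_of_periodic hg h0]
  exact (norm_sum_le _ _).trans (sum_le_sum_of_subset_of_nonneg
    (range_subset_range.mpr (Nat.mod_lt n hp).le) fun _ _ _ => norm_nonneg _)

section Walk

lemma walk_congr {y y' : ℕ → Bool} {x : ℕ} (h : ∀ i < x, y i = y' i) : walk y x = walk y' x :=
  sum_congr rfl fun i hi => by rw [h i (mem_range.mp hi)]

lemma walk_add (y : ℕ → Bool) (m n : ℕ) :
    walk y (m + n) = walk y m + walk (fun i => y (m + i)) n :=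
  sum_range_add _ _ _

lemma walk_succ (y : ℕ → Bool) (n : ℕ) : walk y (n + 1) = walk y n + step (y n) :=
  sum_range_succ _ _

lemma walk_shift_nonneg_of_min {y : ℕ → Bool} {N m : ℕ} (hNpos : 0 < N)
    (hy : Function.Periodic y N) (hN : walk y N = 0) (hmin : ∀ u < N, walk y m ≤ walk y u)
    (x : ℕ) : 0 ≤ walk (fun i => y (m + i)) x := by
  have hmod : walk y ((m + x) % N) = walk y (m + x) :=
    sum_range_mod_of_periodic (fun i => congrArg step (hy i)) hN _
  have := hmin _ (Nat.mod_lt (m + x) hNpos)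
  rw [hmod, walk_add] at this
  linarith

lemma wsign_le_one (y : ℕ → Bool) (x : ℕ) : wsign y x ≤ 1 := by
  induction x with
  | zero => exact le_rfl
  | succ n ih =>
    simp only [wsign]
    split_ifs
    · exact ih
    · rcases Int.sign_trichotomy (walk y (n + 1)) with h | h | h <;> omega

lemma wsign_eq_one_of_nonneg {y : ℕ → Bool} {x : ℕ} (hy : ∀ z ≤ x, 0 ≤ walk y z) :
    wsign y x = 1 := by
  induction x with
  | zero => rfl
  | succ n ih =>
    simp only [wsign]
    split_ifs with h0
    · exact ih fun z hz => hy z (hz.trans n.le_succ)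
    · exact Int.sign_eq_one_of_pos (lt_of_le_of_ne (hy _ le_rfl) (Ne.symm h0))

end Walk

section Counting

lemma walk_ext_eq {N : ℕ} (y : Fin N → Bool) {z : ℕ → Bool}
    (hz : ∀ i (hi : i < N), z i = y ⟨i, hi⟩) {x : ℕ} (hx : x ≤ N) : walk (ext y) x = walk z x :=
  walk_congr fun i hi => by rw [ext, dif_pos (by omega), hz]

open Classical in
def nonnegPaths (N : ℕ) : Finset (Fin N → Bool) := {y | ∀ x ≤ N, 0 ≤ walk (ext y) x}

open Classical in
def bridges (N : ℕ) : Finset (Fin N → Bool) := {y | walk (ext y) N = 0}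

open Fin.NatCast in
lemma card_bridges_le (N : ℕ) [NeZero N] : #(bridges N) ≤ N * #(nonnegPaths N) := by
  have hsurj : Set.SurjOn (fun p : Fin N × (Fin N → Bool) => fun i => p.2 (i - p.1))
      (univ ×ˢ nonnegPaths N : Finset (Fin N × (Fin N → Bool)))
      (bridges N : Set (Fin N → Bool)) := by
    intro y hy
    set z : ℕ → Bool := fun i => y i
    have hz : ∀ i (hi : i < N), z i = y ⟨i, hi⟩ := fun i hi => by simp [z, Fin.natCast_eq_mk hi]
    have hzper : Function.Periodic z N := fun i => by simp [z]
    have hzN : walk z N = 0 := by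
      rw [← walk_ext_eq y hz le_rfl]
      simpa [bridges] using hy
    obtain ⟨m, -, hmin⟩ :=
      exists_min_image (range N) (walk z) (nonempty_range_iff.mpr (NeZero.ne N))
    refine ⟨((m : Fin N), fun i => y (i + m)), ?_, by simp⟩
    simp only [coe_product, coe_univ, Set.mem_prod, Set.mem_univ, true_and, mem_coe,
      nonnegPaths, mem_filter, mem_univ]
    intro x hx
    rw [walk_ext_eq _ (z := fun i => z (m + i))
      (fun i hi => by simp [z, add_comm, Fin.natCast_eq_mk hi]) hx]
    exact walk_shift_nonneg_of_min (Nat.pos_of_neZero N) hzper hzN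
      (fun u hu => hmin u (mem_range.mpr hu)) x
  calc #(bridges N) ≤ #(univ ×ˢ nonnegPaths N) := card_le_card_of_surjOn _ hsurj
    _ = N * #(nonnegPaths N) := by rw [card_product, card_univ, Fintype.card_fin]

lemma walk_ext_eq_two_mul_card_sub {N : ℕ} (y : Fin N → Bool) :
    walk (ext y) N = 2 * #{i | y i} - N := by
  have hstep : ∀ b : Bool, step b = 2 * (if b then 1 else 0) - 1 := by decide
  rw [walk, ← Fin.sum_univ_eq_sum_range]
  simp only [ext, Fin.is_lt, dif_pos, Fin.eta, hstep, sum_sub_distrib, ← mul_sum, sum_boole]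
  simp

lemma choose_le_card_bridges (n : ℕ) : (2 * n).choose n ≤ #(bridges (2 * n)) := by
  calc (2 * n).choose n = #(powersetCard n (univ : Finset (Fin (2 * n)))) := by simp
    _ ≤ #(bridges (2 * n)) := by
      refine card_le_card_of_injOn (fun s i => decide (i ∈ s)) (fun s hs => ?_)
        fun s _ t _ hst => ?_
      · have hs : #s = n := (mem_powersetCard.mp hs).2
        simp [bridges, walk_ext_eq_two_mul_card_sub, hs]
      · ext i
        simpa using congrFun hst i

lemma card_nonnegPaths_le_succ (N : ℕ) : #(nonnegPaths N) ≤ #(nonnegPaths (N + 1)) := by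
  refine card_le_card_of_injOn (fun y => Fin.snoc (α := fun _ => Bool) y true) (fun y hy => ?_)
    fun y _ y' _ h => (Fin.snoc_injective2 h).1
  have hy : ∀ x ≤ N, 0 ≤ walk (ext y) x := by simpa [nonnegPaths] using hy
  have hprefix : ∀ x ≤ N, walk (ext (Fin.snoc (α := fun _ => Bool) y true)) x = walk (ext y) x :=
    fun x hx => walk_congr fun i hi => by
      simp [ext, show i < N by omega, show i < N + 1 by omega, Fin.snoc]
  simp only [nonnegPaths, mem_filter, mem_univ, true_and, mem_coe]
  intro x hx
  rcases (show x ≤ N ∨ x = N + 1 by omega) with hx' | rfl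
  · rw [hprefix x hx']
    exact hy x hx'
  · have hlast : ext (Fin.snoc (α := fun _ => Bool) y true) N = true := by simp [ext, Fin.snoc]
    rw [walk_succ, hprefix N le_rfl, hlast, show step true = 1 from rfl]
    linarith [hy N le_rfl]

lemma four_pow_le_card_nonnegPaths (n : ℕ) :
    4 ^ n ≤ (2 * n + 1) ^ 2 * #(nonnegPaths (2 * n)) := by
  rcases Nat.eq_zero_or_pos n with rfl | hn
  · decide
  have : NeZero (2 * n) := ⟨by omega⟩
  calc 4 ^ n ≤ (2 * n + 1) * (2 * n).choose n :=
        Nat.four_pow_le_two_mul_add_one_mul_central_binom n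
    _ ≤ (2 * n + 1) * (2 * n * #(nonnegPaths (2 * n))) :=
      Nat.mul_le_mul_left _ ((choose_le_card_bridges n).trans (card_bridges_le _))
    _ ≤ (2 * n + 1) ^ 2 * #(nonnegPaths (2 * n)) := by
      rw [sq, mul_assoc (2 * n + 1)]
      gcongr
      omega

lemma two_pow_le_card_nonnegPaths (N : ℕ) : 2 ^ N ≤ 2 * (N + 1) ^ 2 * #(nonnegPaths N) := by
  obtain ⟨n, rfl | rfl⟩ := Nat.even_or_odd' N
  · calc 2 ^ (2 * n) = 4 ^ n := by rw [pow_mul]; norm_num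
      _ ≤ (2 * n + 1) ^ 2 * #(nonnegPaths (2 * n)) := four_pow_le_card_nonnegPaths n
      _ ≤ 2 * (2 * n + 1) ^ 2 * #(nonnegPaths (2 * n)) := by
        rw [mul_assoc]
        omega
  · calc 2 ^ (2 * n + 1) = 2 * 4 ^ n := by rw [pow_succ, pow_mul]; ring
      _ ≤ 2 * ((2 * n + 1) ^ 2 * #(nonnegPaths (2 * n))) :=
        Nat.mul_le_mul_left _ (four_pow_le_card_nonnegPaths n)
      _ ≤ 2 * (2 * n + 1 + 1) ^ 2 * #(nonnegPaths (2 * n + 1)) := by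
        rw [mul_assoc]
        exact Nat.mul_le_mul_left _
          (Nat.mul_le_mul (Nat.pow_le_pow_left (by omega) 2) (card_nonnegPaths_le_succ _))

end Counting

section PartitionFunction

variable (ω : ℕ → ℤ) (lam h : ℝ)

lemma Zpart_le_exp (hωh : ∀ x, 0 ≤ (ω x : ℝ) + h) (hlam : 0 ≤ lam) (N : ℕ) :
    Zpart ω lam h N ≤ Real.exp (lam * ∑ x ∈ Icc 1 N, ((ω x : ℝ) + h)) := by
  have hterm : ∀ (y : Fin N → Bool) x, ((ω x : ℝ) + h) * wsign (ext y) x ≤ (ω x : ℝ) + h :=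
    fun y x => mul_le_of_le_one_right (hωh x) (by exact_mod_cast wsign_le_one _ _)
  calc Zpart ω lam h N
      ≤ (1 / 2) ^ N * ∑ _y : Fin N → Bool, Real.exp (lam * ∑ x ∈ Icc 1 N, ((ω x : ℝ) + h)) := by
        unfold Zpart
        gcongr with y
        exact hterm y _
    _ = Real.exp (lam * ∑ x ∈ Icc 1 N, ((ω x : ℝ) + h)) := by
        rw [sum_const, card_univ, Fintype.card_fun, Fintype.card_bool, Fintype.card_fin,
          nsmul_eq_mul, ← mul_assoc, Nat.cast_pow, ← mul_pow]
        norm_num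

lemma exp_div_le_Zpart (N : ℕ) :
    Real.exp (lam * ∑ x ∈ Icc 1 N, ((ω x : ℝ) + h)) / (2 * ((N : ℝ) + 1) ^ 2)
      ≤ Zpart ω lam h N := by
  set E := Real.exp (lam * ∑ x ∈ Icc 1 N, ((ω x : ℝ) + h))
  have hcount : (1 : ℝ) ≤ (1 / 2) ^ N * (2 * ((N : ℝ) + 1) ^ 2 * #(nonnegPaths N)) := by
    rw [one_div, inv_pow, ← div_eq_inv_mul, one_le_div (by positivity)]
    exact_mod_cast two_pow_le_card_nonnegPaths N
  have hnonneg : ∀ y ∈ nonnegPaths N,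
      Real.exp (lam * ∑ x ∈ Icc 1 N, ((ω x : ℝ) + h) * wsign (ext y) x) = E := by
    intro y hy
    simp only [nonnegPaths, mem_filter, mem_univ, true_and] at hy
    refine congrArg Real.exp (congrArg _ (sum_congr rfl fun x hx => ?_))
    rw [wsign_eq_one_of_nonneg fun z hz => hy z (hz.trans (mem_Icc.mp hx).2)]
    simp
  calc E / (2 * ((N : ℝ) + 1) ^ 2)
      ≤ (1 / 2) ^ N * (#(nonnegPaths N) * E) := by
        rw [div_le_iff₀ (by positivity)]
        nlinarith [Real.exp_pos (lam * ∑ x ∈ Icc 1 N, ((ω x : ℝ) + h))]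
    _ = (1 / 2) ^ N * ∑ y ∈ nonnegPaths N,
          Real.exp (lam * ∑ x ∈ Icc 1 N, ((ω x : ℝ) + h) * wsign (ext y) x) := by
        rw [sum_congr rfl hnonneg, sum_const, nsmul_eq_mul]
    _ ≤ Zpart ω lam h N := by
        unfold Zpart
        gcongr
        exact subset_univ _

lemma abs_log_Zpart_sub_le (hωh : ∀ x, 0 ≤ (ω x : ℝ) + h) (hlam : 0 ≤ lam) (N : ℕ) :
    |Real.log (Zpart ω lam h N) - lam * ∑ x ∈ Icc 1 N, ((ω x : ℝ) + h)|
      ≤ Real.log (2 * ((N : ℝ) + 1) ^ 2) := by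
  have hlow := exp_div_le_Zpart ω lam h N
  have hZ : 0 < Zpart ω lam h N := lt_of_lt_of_le (by positivity) hlow
  have hup := (Real.log_le_iff_le_exp hZ).mpr (Zpart_le_exp ω lam h hωh hlam N)
  replace hlow := Real.log_le_log (by positivity) hlow
  rw [Real.log_div (Real.exp_ne_zero _) (by positivity), Real.log_exp] at hlow
  have hD : 0 ≤ Real.log (2 * ((N : ℝ) + 1) ^ 2) :=
    Real.log_nonneg (by nlinarith [N.cast_nonneg (α := ℝ)])
  rw [abs_le]
  constructor <;> linarith

end PartitionFunction

lemma IsPeriod.exists_abs_sum_Icc_le {ω : ℕ → ℤ} {T : ℕ} (hT : IsPeriod ω T) :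
    ∃ B, ∀ N, |∑ x ∈ Icc 1 N, (ω x : ℝ)| ≤ B := by
  obtain ⟨hTpos, hper, hsum⟩ := hT
  have hIcc : ∀ N, ∑ x ∈ Icc 1 N, (ω x : ℝ) = ∑ i ∈ range N, (ω (i + 1) : ℝ) := fun N => by
    rw [range_eq_Ico, sum_Ico_add' (fun x => (ω x : ℝ)), zero_add, Ico_add_one_right_eq_Icc]
  refine ⟨∑ i ∈ range (2 * T), ‖(ω (i + 1) : ℝ)‖, fun N => ?_⟩
  rw [hIcc, ← Real.norm_eq_abs]
  refine norm_sum_range_le_of_periodic (by omega) (fun i => ?_) ?_ N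
  · simp only [add_right_comm i, hper]
  · rw [← hIcc]
    exact_mod_cast hsum

lemma tendsto_log_two_mul_add_one_sq_div :
    Tendsto (fun N : ℕ => Real.log (2 * ((N : ℝ) + 1) ^ 2) / N) atTop (𝓝 0) := by
  have hlog : Tendsto (fun N : ℕ => Real.log ((N : ℝ) + 1) / N) atTop (𝓝 0) := by
    have := (Real.tendsto_pow_log_div_mul_add_atTop 1 (-1) 1 one_ne_zero).comp
      (tendsto_atTop_add_const_right _ 1 tendsto_natCast_atTop_atTop)
    simpa [Function.comp_def] using this
  have := (tendsto_const_div_atTop_nhds_zero_nat (Real.log 2)).add (hlog.const_mul 2)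
  rw [mul_zero, add_zero] at this
  refine this.congr fun N => ?_
  rw [Real.log_mul two_ne_zero (by positivity), Real.log_pow]
  push_cast
  ring

theorem tendsto_log_Zpart_div {ω : ℕ → ℤ} {T : ℕ} (hω : ∀ x, ω x = 1 ∨ ω x = -1)
    (hT : IsPeriod ω T) {lam h : ℝ} (hh : 1 ≤ h) (hlam : 0 ≤ lam) :
    Tendsto (fun N : ℕ => Real.log (Zpart ω lam h N) / N) atTop (𝓝 (lam * h)) := by
  obtain ⟨B, hB⟩ := hT.exists_abs_sum_Icc_le
  have hωh : ∀ x, 0 ≤ (ω x : ℝ) + h := fun x => by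
    rcases hω x with hx | hx <;> rw [hx] <;> push_cast <;> linarith
  have herr : ∀ N : ℕ, |Real.log (Zpart ω lam h N) - lam * h * N|
      ≤ lam * B + Real.log (2 * ((N : ℝ) + 1) ^ 2) := by
    intro N
    have hS : ∑ x ∈ Icc 1 N, ((ω x : ℝ) + h) = ∑ x ∈ Icc 1 N, (ω x : ℝ) + N * h := by
      simp [sum_add_distrib]
    have hZ := abs_le.mp (abs_log_Zpart_sub_le ω lam h hωh hlam N)
    have hC := abs_le.mp (hB N)
    rw [hS] at hZ
    rw [abs_le]
    constructor <;> nlinarith [mul_le_mul_of_nonneg_left hC.2 hlam,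
      mul_le_mul_of_nonneg_left hC.1 hlam]
  have hbound : Tendsto (fun N : ℕ => (lam * B + Real.log (2 * ((N : ℝ) + 1) ^ 2)) / N)
      atTop (𝓝 0) := by
    simpa [add_div] using (tendsto_const_div_atTop_nhds_zero_nat (lam * B)).add
      tendsto_log_two_mul_add_one_sq_div
  have hratio : Tendsto (fun N : ℕ => (Real.log (Zpart ω lam h N) - lam * h * N) / N)
      atTop (𝓝 0) := by
    refine squeeze_zero_norm (fun N => ?_) hbound
    rw [norm_div, Real.norm_eq_abs, RCLike.norm_natCast]
    gcongr
    exact herr N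
  have hlim := hratio.const_add (lam * h)
  rw [add_zero] at hlim
  refine hlim.congr' ?_
  filter_upwards [eventually_ne_atTop 0] with N hN
  field_simp
  ring

lemma phiFE_eq_zero {ω : ℕ → ℤ} (hω : memT ω) {lam h : ℝ} (hh : 1 ≤ h) (hlam : 0 ≤ lam) :
    phiFE ω lam h = 0 := by
  obtain ⟨hω, ⟨T, hT⟩, -⟩ := hω
  rw [phiFE, freeEnergy, (tendsto_log_Zpart_div hω hT hh hlam).limUnder_eq, sub_self]

/-- for `h ≥ 1`, `λ ↦ φ_ω(λ,h)` is nonincreasing on `[0,∞)`. -/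
theorem stmt18 (ω : ℕ → ℤ) (hω : memT ω) (h : ℝ) (hh : 1 ≤ h) :
    AntitoneOn (fun lam : ℝ => phiFE ω lam h) (Set.Ici 0) := fun a ha b hb _ => by
  simp only [phiFE_eq_zero hω hh ha, phiFE_eq_zero hω hh hb, le_refl]

end Copoly
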